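/- arXiv:math/9812023 — 4 statements merged into one kernel-verified Lean document; each statement's English description precedes it below -/
import Mathlib

section
/- With the numbers B^n_s defined by the stated recursion, one has B^n_s = 0 whenever n < [s], where [s] = ∑_i s_i(i+1). -/
/-- `c̃_j = c̃_0 - j·A₁`. -/
noncomputable def ctilde (c0 A1 : ℝ) (j : ℕ) : ℝ := c0 - (j : ℝ) * A1

/-- total `|s| = ∑ s_i`. -/
def totdeg (s : ℕ →₀ ℕ) : ℕ := s.sum fun _ v => v

/-- weighted `[s] = ∑ s_i (i+1)`. -/
def wdeg (s : ℕ →₀ ℕ) : ℕ := s.sum fun i v => v * (i + 1)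

/-- `s - σ₀`: decrement `s₀` by one. -/
noncomputable def subσ₀ (s : ℕ →₀ ℕ) : ℕ →₀ ℕ := s.update 0 (s 0 - 1)

/-- `s - σᵢ` for `i ≥ 1`: increment `s_{i-1}`, decrement `s_i`. -/
noncomputable def subσ (s : ℕ →₀ ℕ) (i : ℕ) : ℕ →₀ ℕ :=
  (s.update (i - 1) (s (i - 1) + 1)).update i (s i - 1)

/-- The recursion defining the numbers `B^n_s` (7.7). -/
def BRec (c0 A1 w : ℝ) (B : ℕ → (ℕ →₀ ℕ) → ℝ) : Prop :=
  B 0 0 = 1 ∧ (∀ s : ℕ →₀ ℕ, s ≠ 0 → B 0 s = 0) ∧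
    ∀ n : ℕ, ∀ s : ℕ →₀ ℕ, 1 ≤ n →
      B n s =
        (if s 0 = 0 then 0 else
          ((n + totdeg s - 1 : ℕ) : ℝ) * (ctilde c0 A1 (n + totdeg s - 2) - w) *
            ∑ l ∈ Finset.range n, B l (subσ₀ s))
        + ∑ i ∈ s.support.filter (fun i => 1 ≤ i),
            ((s (i - 1) : ℝ) + 1) * ∑ l ∈ Finset.range n, B l (subσ s i)

lemma wdeg_update (s : ℕ →₀ ℕ) (a b : ℕ) :
    wdeg (s.update a b) + s a * (a + 1) = wdeg s + b * (a + 1) :=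
  Finsupp.sum_update_add s a b _ (fun _ => zero_mul _) (fun _ a b => add_mul a b _)

lemma wdeg_subσ₀ (s : ℕ →₀ ℕ) (h : s 0 ≠ 0) : wdeg (subσ₀ s) + 1 = wdeg s := by
  have := wdeg_update s 0 (s 0 - 1)
  simp only [zero_add, mul_one] at this
  unfold subσ₀
  omega

lemma wdeg_subσ (s : ℕ →₀ ℕ) (i : ℕ) (hi : 1 ≤ i) (h : s i ≠ 0) :
    wdeg (subσ s i) + 1 = wdeg s := by
  set t := s.update (i - 1) (s (i - 1) + 1) with ht
  have h1 := wdeg_update s (i - 1) (s (i - 1) + 1)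
  have h2 := wdeg_update t i (s i - 1)
  have hti : t i = s i := by
    rw [ht]
    simp only [Finsupp.coe_update, Function.update_apply]
    rw [if_neg (by omega)]
  rw [hti] at h2
  rw [add_mul, one_mul] at h1
  have h3 : (s i - 1) * (i + 1) + (i + 1) = s i * (i + 1) := by
    conv_rhs => rw [show s i = s i - 1 + 1 from by omega]
    rw [add_mul, one_mul]
  have hii : i - 1 + 1 = i := by omega
  rw [hii] at h1
  rw [← ht] at h1
  unfold subσ
  rw [← ht]
  generalize s (i - 1) * (i - 1 + 1) = P at h1
  generalize s i * (i + 1) = Q at h2 h3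
  generalize (s i - 1) * (i + 1) = R at h2 h3
  omega

theorem stmt_8 (c0 A1 w : ℝ) (B : ℕ → (ℕ →₀ ℕ) → ℝ) (hB : BRec c0 A1 w B) :
    ∀ (n : ℕ) (s : ℕ →₀ ℕ), n < wdeg s → B n s = 0 := by
  obtain ⟨h0, hz, hrec⟩ := hB
  intro n
  induction n using Nat.strong_induction_on with
  | _ n ih =>
    intro s hs
    rcases Nat.eq_zero_or_pos n with rfl | hn
    · apply hz
      rintro rfl
      simp [wdeg] at hs
    · rw [hrec n s hn]
      have hfst : (if s 0 = 0 then (0:ℝ) else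
          ((n + totdeg s - 1 : ℕ) : ℝ) * (ctilde c0 A1 (n + totdeg s - 2) - w) *
            ∑ l ∈ Finset.range n, B l (subσ₀ s)) = 0 := by
        split_ifs with h
        · rfl
        · have hw := wdeg_subσ₀ s h
          have : ∑ l ∈ Finset.range n, B l (subσ₀ s) = 0 := by
            apply Finset.sum_eq_zero
            intro l hl
            rw [Finset.mem_range] at hl
            exact ih l hl _ (by omega)
          rw [this, mul_zero]
      rw [hfst, zero_add]
      apply Finset.sum_eq_zero
      intro i hi
      rw [Finset.mem_filter, Finsupp.mem_support_iff] at hi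
      have hw := wdeg_subσ s i hi.2 hi.1
      have : ∑ l ∈ Finset.range n, B l (subσ s i) = 0 := by
        apply Finset.sum_eq_zero
        intro l hl
        rw [Finset.mem_range] at hl
        exact ih l hl _ (by omega)
      rw [this, mul_zero]
end

section
/- With the B^n_s recursion and {n} := n(c̃_{n-1} - w), one has B^n_{(2)} = {n+1}·∑_{l=1}^{n-1}{l} for all n ≥ 2, and B^1_{(2)} = 0, where (2) denotes the sequence (2,0,0,…). -/
/-! The proof only ever evaluates `B` at multiples `k·σ₀ = (k, 0, 0, …)`. On these only the
`σ₀`-term of the recursion survives, giving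
`B^n_{(k+1)} = (n+k)(c̃_{n+k-1} - w) ∑_{l<n} B^l_{(k)}`. Since `∑_{l<n} B^l_{(0)} = 1`, this
yields `B^l_{(1)} = {l}`, and one more step gives the formula for `B^n_{(2)}`. -/

lemma totdeg_single_zero (k : ℕ) : totdeg (Finsupp.single 0 k) = k := by
  simp [totdeg, Finsupp.sum_single_index]

lemma subσ₀_single_zero (k : ℕ) : subσ₀ (Finsupp.single 0 (k + 1)) = Finsupp.single 0 k := by
  ext i
  rcases eq_or_ne i 0 with rfl | hi
  · simp [subσ₀]
  · simp [subσ₀, Ne.symm hi, Function.update_of_ne hi]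

lemma filter_one_le_support_single_zero (k : ℕ) :
    (Finsupp.single 0 k : ℕ →₀ ℕ).support.filter (fun i => 1 ≤ i) = ∅ := by
  ext i
  simp only [Finset.mem_filter, Finsupp.mem_support_iff, Finsupp.single_apply,
    Finset.notMem_empty, iff_false, not_and]
  intro h
  split_ifs at h with hi <;> omega

namespace BRec

variable {c0 A1 w : ℝ} {B : ℕ → (ℕ →₀ ℕ) → ℝ}

lemma apply_zero_of_pos (hB : BRec c0 A1 w B) {n : ℕ} (hn : 1 ≤ n) : B n 0 = 0 := by
  simp [hB.2.2 n 0 hn]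

lemma sum_range_apply_zero (hB : BRec c0 A1 w B) {n : ℕ} (hn : 1 ≤ n) :
    ∑ l ∈ Finset.range n, B l 0 = 1 := by
  induction n, hn using Nat.le_induction with
  | base => simpa using hB.1
  | succ m hm ih => rw [Finset.sum_range_succ, ih, hB.apply_zero_of_pos hm, add_zero]

lemma apply_zero_single_zero (hB : BRec c0 A1 w B) (k : ℕ) :
    B 0 (Finsupp.single 0 (k + 1)) = 0 :=
  hB.2.1 _ (by simp)

lemma apply_single_zero_succ (hB : BRec c0 A1 w B) {n : ℕ} (hn : 1 ≤ n) (k : ℕ) :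
    B n (Finsupp.single 0 (k + 1)) =
      ((n + k : ℕ) : ℝ) * (ctilde c0 A1 (n + k - 1) - w) *
        ∑ l ∈ Finset.range n, B l (Finsupp.single 0 k) := by
  rw [hB.2.2 n _ hn, filter_one_le_support_single_zero, Finset.sum_empty, add_zero,
    Finsupp.single_eq_same, if_neg k.succ_ne_zero, totdeg_single_zero, subσ₀_single_zero,
    show n + (k + 1) - 1 = n + k by omega, show n + (k + 1) - 2 = n + k - 1 by omega]

lemma apply_single_zero_one (hB : BRec c0 A1 w B) (n : ℕ) :
    B n (Finsupp.single 0 1) = n * (ctilde c0 A1 (n - 1) - w) := by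
  rcases Nat.eq_zero_or_pos n with rfl | hn
  · simpa using hB.apply_zero_single_zero 0
  · rw [hB.apply_single_zero_succ hn, Finsupp.single_zero, hB.sum_range_apply_zero hn]
    simp

lemma apply_single_zero_two (hB : BRec c0 A1 w B) {n : ℕ} (hn : 1 ≤ n) :
    B n (Finsupp.single 0 2) =
      ((n : ℝ) + 1) * (ctilde c0 A1 n - w) *
        ∑ l ∈ Finset.Icc 1 (n - 1), (l : ℝ) * (ctilde c0 A1 (l - 1) - w) := by
  have hIcc : Finset.Icc 1 (n - 1) = Finset.Ico 1 n := by
    ext l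
    simp only [Finset.mem_Icc, Finset.mem_Ico]
    omega
  rw [hB.apply_single_zero_succ hn, Finset.sum_range_eq_add_Ico _ hn, hIcc]
  simp [hB.apply_single_zero_one]

end BRec

theorem stmt_9 (c0 A1 w : ℝ) (B : ℕ → (ℕ →₀ ℕ) → ℝ) (hB : BRec c0 A1 w B) :
    (∀ n : ℕ, 2 ≤ n →
      B n (Finsupp.single 0 2) =
        ((n : ℝ) + 1) * (ctilde c0 A1 n - w) *
          ∑ l ∈ Finset.Icc 1 (n - 1), (l : ℝ) * (ctilde c0 A1 (l - 1) - w)) ∧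
    B 1 (Finsupp.single 0 2) = 0 :=
  ⟨fun _ hn => hB.apply_single_zero_two (by omega),
    by simpa using hB.apply_single_zero_two le_rfl⟩
end

section
/- With the B^n_s recursion as above, B^n_{(0,0,1)} = ∑_{l'=2}^{n-1} ∑_{l=1}^{l'-1} {l} for all n ≥ 3, where (0,0,1) has s₂=1 and all other entries 0. -/
lemma aux_subσ₀_s0 : subσ₀ (Finsupp.single 0 1) = 0 := by
  ext a
  simp only [subσ₀, Finsupp.coe_update, Function.update_apply, Finsupp.single_apply,
    Finsupp.coe_zero, Pi.zero_apply]
  split_ifs <;> first | omega | exact False.elim (by assumption)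

lemma aux_subσ_s1 : subσ (Finsupp.single 1 1) 1 = Finsupp.single 0 1 := by
  ext a
  simp only [subσ, Finsupp.coe_update, Function.update_apply, Finsupp.single_apply]
  split_ifs <;> first | omega | exact False.elim (by assumption)

lemma aux_subσ_s2 : subσ (Finsupp.single 2 1) 2 = Finsupp.single 1 1 := by
  ext a
  simp only [subσ, Finsupp.coe_update, Function.update_apply, Finsupp.single_apply]
  split_ifs <;> first | omega | exact False.elim (by assumption)

lemma aux_filter (k : ℕ) :
    ((Finsupp.single k 1 : ℕ →₀ ℕ).support.filter (fun i => 1 ≤ i))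
      = if 1 ≤ k then {k} else ∅ := by
  rw [Finsupp.support_single_ne_zero k one_ne_zero, Finset.filter_singleton]

lemma aux_totdeg (k : ℕ) : totdeg (Finsupp.single k 1) = 1 := by
  simp [totdeg, Finsupp.sum_single_index]

section
variable {c0 A1 w : ℝ} {B : ℕ → (ℕ →₀ ℕ) → ℝ} (hB : BRec c0 A1 w B)
include hB

lemma aux_Bzero : ∀ l : ℕ, 1 ≤ l → B l 0 = 0 := by
  intro l hl
  rw [hB.2.2 l 0 hl]
  simp

lemma aux_sumBzero : ∀ n : ℕ, 1 ≤ n → ∑ l ∈ Finset.range n, B l 0 = 1 := by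
  intro n hn
  rw [Finset.sum_eq_single_of_mem 0 (Finset.mem_range.2 (by omega))
    (fun b _ hb => aux_Bzero hB b (by omega)), hB.1]

lemma aux_Bs0 : ∀ n : ℕ, 1 ≤ n →
    B n (Finsupp.single 0 1) = (n : ℝ) * (ctilde c0 A1 (n - 1) - w) := by
  intro n hn
  rw [hB.2.2 n _ hn]
  rw [aux_subσ₀_s0, aux_sumBzero hB n hn, aux_filter, aux_totdeg]
  have h0 : (Finsupp.single 0 1 : ℕ →₀ ℕ) 0 = 1 := by simp
  rw [h0]
  have h1 : n + 1 - 1 = n := by omega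
  have h2 : n + 1 - 2 = n - 1 := by omega
  simp [h1, h2]

lemma aux_Bs1 : ∀ n : ℕ,
    B n (Finsupp.single 1 1) =
      ∑ l ∈ Finset.Icc 1 (n - 1), (l : ℝ) * (ctilde c0 A1 (l - 1) - w) := by
  intro n
  rcases Nat.eq_zero_or_pos n with rfl | hn
  · rw [hB.2.1 _ (by simp)]
    simp
  · rw [hB.2.2 n _ hn]
    have h0 : (Finsupp.single 1 1 : ℕ →₀ ℕ) 0 = 0 := by simp
    rw [h0, if_pos rfl, aux_filter, if_pos le_rfl, Finset.sum_singleton, aux_subσ_s1]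
    have hs : (Finsupp.single 1 1 : ℕ →₀ ℕ) (1 - 1) = 0 := by simp
    rw [hs, zero_add]
    have hr : Finset.range n = Finset.Ico 0 n := by rw [Finset.range_eq_Ico]
    rw [hr, Finset.sum_eq_sum_Ico_succ_bot hn]
    rw [hB.2.1 _ (by simp)]
    have hIco : Finset.Ico (0 + 1) n = Finset.Icc 1 (n - 1) := by
      have h2 : (n - 1).succ = n := by omega
      rw [← Finset.Ico_add_one_right_eq_Icc, ← Nat.succ_eq_add_one (n - 1), h2]
    rw [hIco]
    rw [Finset.sum_congr rfl (fun l hl =>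
      aux_Bs0 hB l (Finset.mem_Icc.1 hl).1)]
    ring

end

theorem stmt_11 (c0 A1 w : ℝ) (B : ℕ → (ℕ →₀ ℕ) → ℝ) (hB : BRec c0 A1 w B) :
    ∀ n : ℕ, 3 ≤ n →
      B n (Finsupp.single 2 1) =
        ∑ l' ∈ Finset.Icc 2 (n - 1), ∑ l ∈ Finset.Icc 1 (l' - 1),
          (l : ℝ) * (ctilde c0 A1 (l - 1) - w) := by
  intro n hn
  rw [hB.2.2 n _ (by omega)]
  have h0 : (Finsupp.single 2 1 : ℕ →₀ ℕ) 0 = 0 := by simp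
  rw [h0, if_pos rfl, aux_filter, if_pos (by omega), Finset.sum_singleton, aux_subσ_s2]
  have hs : (Finsupp.single 2 1 : ℕ →₀ ℕ) (2 - 1) = 0 := by simp
  rw [hs, zero_add]
  rw [Finset.range_eq_Ico, Finset.sum_eq_sum_Ico_succ_bot (by omega : 0 < n),
    Finset.sum_eq_sum_Ico_succ_bot (by omega : 0 + 1 < n)]
  rw [aux_Bs1 hB, aux_Bs1 hB]
  have hIco : Finset.Ico (0 + 1 + 1) n = Finset.Icc 2 (n - 1) := by
    have h2 : (n - 1).succ = n := by omega
    rw [← Finset.Ico_add_one_right_eq_Icc, ← Nat.succ_eq_add_one (n - 1), h2]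
  rw [hIco]
  rw [Finset.sum_congr rfl (fun l' _ => aux_Bs1 hB l')]
  simp
end

section
/- Regard the numbers B^n_s as polynomials in the two variables A₁ and (c̃_0 - w) (via c̃_j - w = (c̃_0 - w) - jA₁). When evaluated at w = c̃_{k-1}, i.e., substituting c̃_0 - w = (k-1)A₁, the resulting number B^n_s is a homogeneous polynomial of degree |s| in A₁; equivalently, B^n_s |_{w=c̃_{k-1}} = A₁^{|s|} · P(n,s,k) for some quantity P independent of A₁. -/
lemma totdeg_update (s : ℕ →₀ ℕ) (i a : ℕ) :
    totdeg (s.update i a) + s i = totdeg s + a := by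
  simpa [totdeg] using Finsupp.sum_update_add s i a (fun _ v => v) (fun _ => rfl)
    (fun _ _ _ => rfl)

lemma apply_le_totdeg (s : ℕ →₀ ℕ) (i : ℕ) : s i ≤ totdeg s :=
  Finsupp.le_degree i s

lemma totdeg_subσ₀ {s : ℕ →₀ ℕ} (h : s 0 ≠ 0) : totdeg (subσ₀ s) = totdeg s - 1 := by
  have := totdeg_update s 0 (s 0 - 1)
  unfold subσ₀
  omega

lemma totdeg_subσ {s : ℕ →₀ ℕ} {i : ℕ} (hi : 1 ≤ i) (h : s i ≠ 0) :
    totdeg (subσ s i) = totdeg s := by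
  have h₁ := totdeg_update s (i - 1) (s (i - 1) + 1)
  have h₂ := totdeg_update (s.update (i - 1) (s (i - 1) + 1)) i (s i - 1)
  rw [Finsupp.update_apply, if_neg (by omega)] at h₂
  unfold subσ
  omega

lemma ctilde_sub (c0 a A1 : ℝ) (j : ℕ) : ctilde c0 A1 j - (c0 - a * A1) = (a - j) * A1 := by
  unfold ctilde
  ring

lemma BRec.apply_zero {c0 A1 w : ℝ} {B : ℕ → (ℕ →₀ ℕ) → ℝ} (hB : BRec c0 A1 w B)
    (s : ℕ →₀ ℕ) : B 0 s = if s = 0 then 1 else 0 := by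
  split_ifs with hs
  · exact hs ▸ hB.1
  · exact hB.2.1 s hs

theorem BRec.eq_pow_totdeg_mul {c0 a : ℝ} {B : ℝ → ℕ → (ℕ →₀ ℕ) → ℝ}
    (hB : ∀ A1 : ℝ, BRec c0 A1 (c0 - a * A1) (B A1)) (n : ℕ) (s : ℕ →₀ ℕ) (A1 : ℝ) :
    B A1 n s = A1 ^ totdeg s * B 1 n s := by
  induction n using Nat.strong_induction_on generalizing s with
  | _ n ih =>
  rcases n with _ | m
  · rw [(hB A1).apply_zero, (hB 1).apply_zero]
    split_ifs with hs <;> simp [hs, totdeg]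
  have sum_scale : ∀ t : ℕ →₀ ℕ, ∑ l ∈ Finset.range (m + 1), B A1 l t
      = A1 ^ totdeg t * ∑ l ∈ Finset.range (m + 1), B 1 l t := fun t => by
    rw [Finset.mul_sum]
    exact Finset.sum_congr rfl fun l hl => ih l (Finset.mem_range.mp hl) t
  have shift_terms : ∀ i ∈ s.support.filter (fun i => 1 ≤ i),
      ((s (i - 1) : ℝ) + 1) * ∑ l ∈ Finset.range (m + 1), B A1 l (subσ s i)
        = A1 ^ totdeg s *
          (((s (i - 1) : ℝ) + 1) * ∑ l ∈ Finset.range (m + 1), B 1 l (subσ s i)) := by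
    intro i hi
    simp only [Finset.mem_filter, Finsupp.mem_support_iff] at hi
    rw [sum_scale, totdeg_subσ hi.2 hi.1]
    ring
  rw [(hB A1).2.2 _ s m.succ_pos, (hB 1).2.2 _ s m.succ_pos, Finset.sum_congr rfl shift_terms,
    ← Finset.mul_sum, mul_add]
  congr 1
  split_ifs with h0
  · simp
  rw [ctilde_sub, ctilde_sub, sum_scale, totdeg_subσ₀ h0,
    ← mul_pow_sub_one (n := totdeg s) (by have := apply_le_totdeg s 0; omega) A1]
  ring

theorem stmt_12_general (c0 : ℝ) (k : ℕ)
    (B : ℝ → ℕ → (ℕ →₀ ℕ) → ℝ)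
    (hB : ∀ A1 : ℝ, BRec c0 A1 (ctilde c0 A1 (k - 1)) (B A1)) :
    ∀ (n : ℕ) (s : ℕ →₀ ℕ), ∃ P : ℝ, ∀ A1 : ℝ, B A1 n s = A1 ^ totdeg s * P :=
  fun n s => ⟨B 1 n s, BRec.eq_pow_totdeg_mul hB n s⟩

/-- Evaluated at `w = c̃_{k-1}`, the numbers `B^n_s` are homogeneous of degree `|s|` in `A₁`:
`B^n_s = A₁^{|s|} · P(n,s,k)` with `P` independent of `A₁`. -/
theorem stmt_12 (c0 : ℝ) (k : ℕ) (hk : 1 ≤ k)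
    (B : ℝ → ℕ → (ℕ →₀ ℕ) → ℝ)
    (hB : ∀ A1 : ℝ, BRec c0 A1 (ctilde c0 A1 (k - 1)) (B A1)) :
    ∀ (n : ℕ) (s : ℕ →₀ ℕ), ∃ P : ℝ, ∀ A1 : ℝ, B A1 n s = A1 ^ totdeg s * P :=
  stmt_12_general c0 k B hB
end
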